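/- Let I₀(x) = ∑_{k=0}^∞ (x/2)^{2k} / (k!)². Fix β ∈ ℝ, μ > 0, ℓ > 0, R > 0, and let c₁, c₂ ∈ ℝ. Define v : (0, R] → ℝ by v(r) = (β/(4μ))(R² − r²) + c₁ ℓ² I₀(r/ℓ) + c₂. Then v is four times differentiable on (0, R) and satisfies the fourth-order Poiseuille equation 𝓛(1 − ℓ²𝓛)v = −β/μ on (0, R), where 𝓛f = f'' + (1/r) f'. -/

import Mathlib

/-- Modified Bessel function of the first kind of order 0. -/
noncomputable def besselI0 (x : ℝ) : ℝ :=
  ∑' k : ℕ, (x / 2) ^ (2 * k) / (k.factorial : ℝ) ^ 2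

/-- The cylindrical operator `𝓛 f = f'' + (1/r) f'`. -/
noncomputable def cylOpL (f : ℝ → ℝ) (r : ℝ) : ℝ :=
  deriv (deriv f) r + (1 / r) * deriv f r

namespace PoiseuilleAux

/-- Coefficient `(2k)(2k-1)⋯(2k-j+1)` (natural subtraction). -/
def bA (j k : ℕ) : ℕ := ∏ i ∈ Finset.range j, (2*k - i)

/-- Denominator `4^k (k!)^2`. -/
noncomputable def bc (k : ℕ) : ℝ := 4^k * (k.factorial : ℝ)^2

lemma bc_pos (k : ℕ) : 0 < bc k := by unfold bc; positivity

lemma bc_succ (k : ℕ) : bc (k+1) = 4 * ((k:ℝ)+1)^2 * bc k := by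
  unfold bc; rw [pow_succ, Nat.factorial_succ]; push_cast; ring

lemma bA_succ (j k : ℕ) : bA (j+1) k = bA j k * (2*k - j) := by
  unfold bA; rw [Finset.prod_range_succ]

lemma bA_ratio (j k : ℕ) (h : j ≤ k) : bA j (k+1) ≤ 3^j * bA j k := by
  unfold bA
  calc ∏ i ∈ Finset.range j, (2*(k+1) - i)
      ≤ ∏ i ∈ Finset.range j, 3*(2*k - i) := by
        apply Finset.prod_le_prod'
        intro i hi
        have : i < j := Finset.mem_range.mp hi
        omega
    _ = 3^j * ∏ i ∈ Finset.range j, (2*k - i) := by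
        rw [Finset.prod_mul_distrib, Finset.prod_const, Finset.card_range]

lemma summable_aux (j : ℕ) (M : ℝ) (hM : 1 ≤ M) :
    Summable (fun k => (bA j k : ℝ) * M^(2*k) / bc k) := by
  apply summable_of_ratio_norm_eventually_le (r := 1/2) (by norm_num)
  have hM0 : (0:ℝ) < M := lt_of_lt_of_le one_pos hM
  filter_upwards [Filter.eventually_ge_atTop (j + Nat.ceil ((3:ℝ)^j * M^2))] with k hk
  have hjk : j ≤ k := le_trans (Nat.le_add_right _ _) hk
  have hceil : ((3:ℝ)^j * M^2) ≤ k := by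
    have : Nat.ceil ((3:ℝ)^j * M^2) ≤ k := le_trans (Nat.le_add_left _ _) hk
    exact le_trans (Nat.le_ceil _) (by exact_mod_cast this)
  have hrat : (bA j (k+1) : ℝ) ≤ 3^j * bA j k := by exact_mod_cast bA_ratio j k hjk
  have hbcp := bc_pos k
  have hbcp1 := bc_pos (k+1)
  rw [Real.norm_eq_abs, Real.norm_eq_abs, abs_of_nonneg (by positivity),
    abs_of_nonneg (by positivity)]
  rw [bc_succ]
  rw [div_le_iff₀ (by positivity)]
  have h1 : M^(2*(k+1)) = M^(2*k) * M^2 := by ring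
  have h2 : ((3:ℝ)^j * M^2) * 1 ≤ (2 * ((k:ℝ)+1)^2) := by
    have : ((3:ℝ)^j * M^2) ≤ (k:ℝ) + 1 := le_trans hceil (by linarith)
    nlinarith [sq_nonneg ((k:ℝ)+1), hM0, pow_pos (show (0:ℝ)<3 by norm_num) j]
  have hRHS : 1/2 * ((bA j k:ℝ) * M^(2*k)/bc k) * (4*((k:ℝ)+1)^2*bc k)
      = ((bA j k:ℝ) * M^(2*k)) * (2*((k:ℝ)+1)^2) := by
    field_simp; ring
  rw [hRHS]
  calc (bA j (k+1) : ℝ) * M^(2*(k+1))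
      ≤ (3^j * bA j k) * (M^(2*k) * M^2) := by
        rw [h1]; exact mul_le_mul_of_nonneg_right hrat (by positivity)
    _ = ((bA j k : ℝ) * M^(2*k)) * (3^j * M^2 * 1) := by ring
    _ ≤ ((bA j k : ℝ) * M^(2*k)) * (2*((k:ℝ)+1)^2) := by
        apply mul_le_mul_of_nonneg_left (by linarith) (by positivity)

/-- The `j`-th derivative series of the Bessel function `I₀`. -/
noncomputable def bg (j : ℕ) (x : ℝ) : ℝ := ∑' k : ℕ, (bA j k : ℝ) * x ^ (2*k - j) / bc k

lemma term_hasDerivAt (j k : ℕ) (x : ℝ) :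
    HasDerivAt (fun y => (bA j k : ℝ) * y ^ (2*k - j) / bc k)
      ((bA (j+1) k : ℝ) * x ^ (2*k - (j+1)) / bc k) x := by
  have h := (hasDerivAt_pow (2*k - j) x).const_mul ((bA j k : ℝ) / bc k)
  have he : ((bA j k : ℝ) / bc k) * (↑(2*k - j) * x ^ (2*k - j - 1))
      = (bA (j+1) k : ℝ) * x ^ (2*k - (j+1)) / bc k := by
    rw [bA_succ]
    have : 2*k - (j+1) = 2*k - j - 1 := by omega
    rw [this]
    push_cast
    ring
  rw [he] at h
  have hf : (fun y => (bA j k : ℝ) * y ^ (2*k - j) / bc k)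
      = fun y => ((bA j k : ℝ) / bc k) * y ^ (2*k - j) := by
    funext y; ring
  rw [hf]; exact h

lemma term_bound (j k : ℕ) (M y : ℝ) (hM : 1 ≤ M) (hy : |y| ≤ M) :
    ‖(bA j k : ℝ) * y ^ (2*k - j) / bc k‖ ≤ (bA j k : ℝ) * M^(2*k) / bc k := by
  have hbc := bc_pos k
  rw [Real.norm_eq_abs, abs_div, abs_mul, abs_of_nonneg (by positivity : (0:ℝ) ≤ (bA j k:ℝ)),
    abs_of_pos hbc, abs_pow]
  have h1 : |y|^(2*k-j) ≤ M^(2*k) := by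
    calc |y|^(2*k-j) ≤ M^(2*k-j) := pow_le_pow_left₀ (abs_nonneg y) hy _
      _ ≤ M^(2*k) := pow_le_pow_right₀ hM (by omega)
  exact (div_le_div_iff_of_pos_right hbc).mpr (mul_le_mul_of_nonneg_left h1 (by positivity))

lemma summable_terms (j : ℕ) (x : ℝ) :
    Summable (fun k => (bA j k : ℝ) * x ^ (2*k - j) / bc k) := by
  have hM : (1:ℝ) ≤ |x| + 1 := by linarith [abs_nonneg x]
  apply Summable.of_norm_bounded (summable_aux j (|x|+1) hM)
  intro k
  exact term_bound j k (|x|+1) x hM (by linarith)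

lemma hasDerivAt_bg (j : ℕ) (x : ℝ) : HasDerivAt (bg j) (bg (j+1) x) x := by
  set M := |x| + 1 with hMdef
  have hM : (1:ℝ) ≤ M := by rw [hMdef]; linarith [abs_nonneg x]
  have hx : x ∈ Metric.ball (0:ℝ) M := by
    simp [Metric.mem_ball, Real.dist_eq, hMdef]
  exact hasDerivAt_tsum_of_isPreconnected (summable_aux (j+1) M hM)
    Metric.isOpen_ball (convex_ball (0:ℝ) M).isPreconnected
    (fun k y _ => term_hasDerivAt j k y)
    (fun k y hy => term_bound (j+1) k M y hM
      (by rw [Metric.mem_ball, Real.dist_eq, sub_zero] at hy; exact hy.le))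
    hx (summable_terms j x) hx

lemma besselI0_eq (x : ℝ) : besselI0 x = bg 0 x := by
  unfold besselI0 bg
  apply tsum_congr
  intro k
  have h4 : ((2:ℝ))^(2*k) = 4^k := by rw [pow_mul]; norm_num
  rw [div_pow, h4]
  unfold bA bc
  simp
  ring

lemma bA_one (k : ℕ) : bA 1 (k+1) = 2*k+2 := by unfold bA; simp; omega

lemma bA_two (k : ℕ) : bA 2 (k+1) = (2*k+2)*(2*k+1) := by
  unfold bA
  rw [Finset.prod_range_succ, Finset.prod_range_one]
  have h1 : 2*(k+1) - 0 = 2*k+2 := by omega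
  have h2 : 2*(k+1) - 1 = 2*k+1 := by omega
  rw [h1, h2]

/-- The Bessel ODE: `I₀'' + (1/x) I₀' = I₀`. -/
lemma bessel_ode (x : ℝ) (hx : x ≠ 0) : bg 2 x + (1/x) * bg 1 x = bg 0 x := by
  unfold bg
  rw [← tsum_mul_left,
    ← Summable.tsum_add (summable_terms 2 x) ((summable_terms 1 x).mul_left (1/x))]
  have hs : Summable (fun k => (bA 2 k : ℝ) * x ^ (2*k - 2) / bc k
      + (1/x) * ((bA 1 k : ℝ) * x ^ (2*k - 1) / bc k)) :=
    (summable_terms 2 x).add ((summable_terms 1 x).mul_left (1/x))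
  rw [Summable.tsum_eq_zero_add hs]
  have h0 : (bA 2 0 : ℝ) * x ^ (2*0 - 2) / bc 0
      + (1/x) * ((bA 1 0 : ℝ) * x ^ (2*0 - 1) / bc 0) = 0 := by
    unfold bA; simp
  rw [h0, zero_add]
  apply tsum_congr
  intro k
  rw [bA_two, bA_one, bc_succ]
  have h1 : 2*(k+1) - 2 = 2*k := by omega
  have h2 : 2*(k+1) - 1 = 2*k+1 := by omega
  have h3 : 2*k - 0 = 2*k := by omega
  have h4 : (bA 0 k : ℝ) = 1 := by unfold bA; simp
  rw [h1, h2, h3, h4]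
  have hbc := (bc_pos k).ne'
  push_cast
  field_simp
  ring

lemma hasDerivAt_bg_comp (j : ℕ) (ℓ : ℝ) (r : ℝ) :
    HasDerivAt (fun s => bg j (s/ℓ)) (bg (j+1) (r/ℓ) * (1/ℓ)) r := by
  have h := (hasDerivAt_bg j (r/ℓ)).comp r ((hasDerivAt_id r).div_const ℓ)
  exact h

end PoiseuilleAux

open PoiseuilleAux in
theorem poiseuille_general_solution
    (β μ ℓ R c₁ c₂ : ℝ) (hμ : 0 < μ) (hℓ : 0 < ℓ) (hR : 0 < R)
    (v : ℝ → ℝ)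
    (hv : ∀ r, v r = β / (4 * μ) * (R ^ 2 - r ^ 2)
      + c₁ * ℓ ^ 2 * besselI0 (r / ℓ) + c₂) :
    DifferentiableOn ℝ v (Set.Ioo 0 R) ∧
    DifferentiableOn ℝ (deriv v) (Set.Ioo 0 R) ∧
    DifferentiableOn ℝ (deriv (deriv v)) (Set.Ioo 0 R) ∧
    DifferentiableOn ℝ (deriv (deriv (deriv v))) (Set.Ioo 0 R) ∧
    ∀ r ∈ Set.Ioo (0:ℝ) R,
      cylOpL (fun s => v s - ℓ ^ 2 * cylOpL v s) r = -(β / μ) := by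
  have hℓ' : ℓ ≠ 0 := hℓ.ne'
  have hμ' : μ ≠ 0 := hμ.ne'
  have hV : v = fun r => β/(4*μ)*(R^2 - r^2) + c₁*ℓ^2*bg 0 (r/ℓ) + c₂ :=
    funext fun r => by rw [hv r, besselI0_eq]
  -- the four derivative levels
  have H1 : ∀ r, HasDerivAt v (-(β/(2*μ))*r + c₁*ℓ*bg 1 (r/ℓ)) r := by
    intro r
    rw [hV]
    have h := (((hasDerivAt_const r (R^2)).sub (hasDerivAt_pow 2 r)).const_mul (β/(4*μ))).add
      ((hasDerivAt_bg_comp 0 ℓ r).const_mul (c₁*ℓ^2)) |>.add_const c₂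
    exact h.congr_deriv (by field_simp; ring)
  have H2 : ∀ r, HasDerivAt (fun r => -(β/(2*μ))*r + c₁*ℓ*bg 1 (r/ℓ))
      (-(β/(2*μ)) + c₁*bg 2 (r/ℓ)) r := by
    intro r
    have h := (((hasDerivAt_id r).const_mul (-(β/(2*μ)))).add
      ((hasDerivAt_bg_comp 1 ℓ r).const_mul (c₁*ℓ)))
    exact h.congr_deriv (by field_simp)
  have H3 : ∀ r, HasDerivAt (fun r => -(β/(2*μ)) + c₁*bg 2 (r/ℓ))
      (c₁*(1/ℓ)*bg 3 (r/ℓ)) r := by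
    intro r
    have h := ((hasDerivAt_bg_comp 2 ℓ r).const_mul c₁).const_add (-(β/(2*μ)))
    exact h.congr_deriv (by ring)
  have H4 : ∀ r, HasDerivAt (fun r => c₁*(1/ℓ)*bg 3 (r/ℓ))
      (c₁*(1/ℓ^2)*bg 4 (r/ℓ)) r := by
    intro r
    have h := (hasDerivAt_bg_comp 3 ℓ r).const_mul (c₁*(1/ℓ))
    exact h.congr_deriv (by ring)
  have d1 : deriv v = fun r => -(β/(2*μ))*r + c₁*ℓ*bg 1 (r/ℓ) :=
    funext fun r => (H1 r).deriv
  have d2 : deriv (deriv v) = fun r => -(β/(2*μ)) + c₁*bg 2 (r/ℓ) := by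
    rw [d1]; exact funext fun r => (H2 r).deriv
  have d3 : deriv (deriv (deriv v)) = fun r => c₁*(1/ℓ)*bg 3 (r/ℓ) := by
    rw [d2]; exact funext fun r => (H3 r).deriv
  refine ⟨(fun r _ => ((H1 r).differentiableAt.differentiableWithinAt)),
    ?_, ?_, ?_, ?_⟩
  · rw [d1]; exact fun r _ => ((H2 r).differentiableAt.differentiableWithinAt)
  · rw [d2]; exact fun r _ => ((H3 r).differentiableAt.differentiableWithinAt)
  · rw [d3]; exact fun r _ => ((H4 r).differentiableAt.differentiableWithinAt)
  -- the equation
  have hL : ∀ s : ℝ, s ≠ 0 → cylOpL v s = -(β/μ) + c₁ * bg 0 (s/ℓ) := by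
    intro s hs
    have hODE := bessel_ode (s/ℓ) (div_ne_zero hs hℓ')
    unfold cylOpL
    rw [d2, d1]
    rw [← hODE]
    field_simp
    ring
  have hw : ∀ s : ℝ, 0 < s →
      (v s - ℓ^2 * cylOpL v s) = β/(4*μ)*(R^2 - s^2) + c₂ + ℓ^2*(β/μ) := by
    intro s hs
    rw [hL s hs.ne', hV]
    ring
  intro r hr
  obtain ⟨hr0, hrR⟩ := hr
  have hr0' : r ≠ 0 := hr0.ne'
  set p : ℝ → ℝ := fun s => β/(4*μ)*(R^2 - s^2) + c₂ + ℓ^2*(β/μ) with hpdef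
  have hp1 : ∀ s, HasDerivAt p (-(β/(2*μ))*s) s := by
    intro s
    have h := (((hasDerivAt_const s (R^2)).sub (hasDerivAt_pow 2 s)).const_mul
      (β/(4*μ))).add_const c₂ |>.add_const (ℓ^2*(β/μ))
    exact h.congr_deriv (by field_simp; ring)
  have hdp : deriv p = fun s => -(β/(2*μ))*s := funext fun s => (hp1 s).deriv
  have hev : (fun s => v s - ℓ^2 * cylOpL v s) =ᶠ[nhds r] p := by
    filter_upwards [Ioi_mem_nhds hr0] with s hs using hw s hs
  have hev' : deriv (fun s => v s - ℓ^2 * cylOpL v s) =ᶠ[nhds r]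
      (fun s => -(β/(2*μ))*s) := by
    filter_upwards [Ioi_mem_nhds hr0] with s hs
    have hevs : (fun s => v s - ℓ^2 * cylOpL v s) =ᶠ[nhds s] p := by
      filter_upwards [Ioi_mem_nhds hs] with t ht using hw t ht
    rw [hevs.deriv_eq, hdp]
  have h1 : deriv (fun s => v s - ℓ^2 * cylOpL v s) r = -(β/(2*μ))*r := by
    rw [hev.deriv_eq, hdp]
  have h2 : deriv (deriv (fun s => v s - ℓ^2 * cylOpL v s)) r = -(β/(2*μ)) := by
    rw [hev'.deriv_eq]
    have h := (hasDerivAt_id r).const_mul (-(β/(2*μ)))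
    simpa using h.deriv
  show deriv (deriv (fun s => v s - ℓ^2 * cylOpL v s)) r
    + (1/r) * deriv (fun s => v s - ℓ^2 * cylOpL v s) r = -(β/μ)
  rw [h1, h2]
  field_simp
  ring
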